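/- arXiv:1109.4296 — 5 statements merged into one kernel-verified Lean document; each statement's English description precedes it below -/
import Mathlib

section
/- Let F(x₁,x₂,s) = (x₁-x₂)² s² + (-2x₁x₂(x₁+x₂) + (g₂/2)(x₁+x₂) + g₃) s + x₁²x₂² + (g₂/2)x₁x₂ + g₃(x₁+x₂) + g₂²/16, and P(x) = 2x³ - (g₂/2)x - g₃/2. Then the discriminant of F viewed as a quadratic polynomial in x₁ equals 4·P(x₂)·P(s); that is, writing F = a(x₂,s)x₁² + b(x₂,s)x₁ + c(x₂,s), one has b² - 4ac = 4·P(x₂)·P(s). -/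
theorem quadratic_coeffs_eq_of_forall_eq {R : Type*} [CommRing R] [NoZeroDivisors R]
    (h2 : (2 : R) ≠ 0) {a b c a' b' c' : R}
    (h : ∀ x, a * x ^ 2 + b * x + c = a' * x ^ 2 + b' * x + c') :
    a = a' ∧ b = b' ∧ c = c' := by
  have hc : c = c' := by linear_combination h 0
  have hb : b = b' := mul_left_cancel₀ h2 (by linear_combination h 1 - h (-1))
  have ha : a = a' := by linear_combination h 1 - hb - hc
  exact ⟨ha, hb, hc⟩

theorem discrim_eq_four_mul_weierstrass_mul {K : Type*} [Field K] (h2 : (2 : K) ≠ 0)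
    (g₂ g₃ y s : K) :
    discrim ((s - y) ^ 2) (-2 * y * s ^ 2 - 2 * y ^ 2 * s + g₂ / 2 * s + g₂ / 2 * y + g₃)
        (y ^ 2 * s ^ 2 + (g₂ / 2 * y + g₃) * s + g₃ * y + g₂ ^ 2 / 16) =
      4 * (2 * y ^ 3 - g₂ / 2 * y - g₃ / 2) * (2 * s ^ 3 - g₂ / 2 * s - g₃ / 2) := by
  have h16 : (16 : K) ≠ 0 := by simpa [show (16 : K) = 2 ^ 4 by norm_num] using h2
  unfold discrim
  field_simp
  ring

theorem stmt_1 (g₂ g₃ x₂ s : ℂ) (P : ℂ → ℂ) (a b c : ℂ)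
    (hP : ∀ x, P x = 2*x^3 - (g₂/2)*x - g₃/2)
    (hF : ∀ x₁ : ℂ, (x₁ - x₂)^2 * s^2
        + (-2*x₁*x₂*(x₁+x₂) + (g₂/2)*(x₁+x₂) + g₃) * s
        + x₁^2*x₂^2 + (g₂/2)*x₁*x₂ + g₃*(x₁+x₂) + g₂^2/16
        = a * x₁^2 + b * x₁ + c) :
    b^2 - 4 * a * c = 4 * P x₂ * P s := by
  obtain ⟨rfl, rfl, rfl⟩ := quadratic_coeffs_eq_of_forall_eq two_ne_zero
    (a := (s - x₂) ^ 2) (b := -2 * x₂ * s ^ 2 - 2 * x₂ ^ 2 * s + g₂ / 2 * s + g₂ / 2 * x₂ + g₃)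
    (c := x₂ ^ 2 * s ^ 2 + (g₂ / 2 * x₂ + g₃) * s + g₃ * x₂ + g₂ ^ 2 / 16) fun x₁ ↦ by
      rw [← hF x₁]
      ring
  rw [hP, hP, ← discrim_eq_four_mul_weierstrass_mul two_ne_zero]
  rfl
end

section
/- Let A(x₁,x₂) = (x₁-x₂)², B(x₁,x₂) = 2x₁x₂(x₁+x₂) + 2a·x₁x₂ + b(x₁+x₂) + 2c, C(x₁,x₂) = x₁²x₂² - b·x₁x₂ - 2c(x₁+x₂) + b²/4 - a·c, and P(x) = 2x³ + a·x² + b·x + c. Then B(x₁,x₂)² - 4·A(x₁,x₂)·C(x₁,x₂) = 4·P(x₁)·P(x₂). -/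
theorem stmt_2 (R : Type*) [Field R] [CharZero R] (a b c x₁ x₂ : R)
    (A B C : R → R → R) (P : R → R)
    (hA : ∀ y₁ y₂, A y₁ y₂ = (y₁ - y₂)^2)
    (hB : ∀ y₁ y₂, B y₁ y₂ = 2*y₁*y₂*(y₁+y₂) + 2*a*y₁*y₂ + b*(y₁+y₂) + 2*c)
    (hC : ∀ y₁ y₂, C y₁ y₂ = y₁^2*y₂^2 - b*y₁*y₂ - 2*c*(y₁+y₂) + b^2/4 - a*c)
    (hP : ∀ x, P x = 2*x^3 + a*x^2 + b*x + c) :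
    (B x₁ x₂)^2 - 4 * A x₁ x₂ * C x₁ x₂ = 4 * P x₁ * P x₂ := by
  rw [hA, hB, hC, hP, hP]
  ring
end

section
/- With X as in the modal example system (X₁ = pqr, X₂ = -((p²-q²)r + γ₃)/2, X₃ = -(pq - q(p²+q²) + qγ₁ - pγ₂)/(2p²), X₄ = (p²+q²)qr + 2prγ₂ - qγ₃, X₅ = -2pq²r + pγ₃ - prγ₁, X₆ = (g₂pq + 4q(p²+q²)² + 4qγ₁(3p²-q²) + 4pγ₂(p²-3q²))/(8p²)) and ρ(p) = 1/(4p²), one has div(ρX) = 0 on the region p ≠ 0; i.e. ρ is the density of an invariant measure. -/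
/-! The last four terms vanish because `X₃, …, X₆` do not depend on the coordinate they are
differentiated in, and the first two cancel: `ρ X₁ = q r / (4 p)` has `p`-derivative
`-q r / (4 p²)`, while `ρ ∂X₂/∂q = q r / (4 p²)`. -/

lemma deriv_one_div_four_mul_sq_mul_self_mul (c x : ℝ) :
    deriv (fun y : ℝ => 1 / (4 * y ^ 2) * (y * c)) x = -c / (4 * x ^ 2) := by
  have hfun : (fun y : ℝ => 1 / (4 * y ^ 2) * (y * c)) = fun y => c / 4 * y⁻¹ := by
    funext y
    rcases eq_or_ne y 0 with rfl | hy
    · simp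
    · field_simp
  rw [hfun, deriv_const_mul_field, deriv_inv]
  ring

lemma hasDerivAt_neg_sub_sq_mul_add_div_two (a b r y : ℝ) :
    HasDerivAt (fun y : ℝ => -((a - y ^ 2) * r + b) / 2) (y * r) y := by
  have h := (((hasDerivAt_const y a).sub (hasDerivAt_pow 2 y)).mul_const r).add_const b
  exact h.neg.div_const 2 |>.congr_deriv (by norm_num; ring)

theorem stmt_5 (g₂ : ℝ)
    (X₁ X₂ X₃ X₄ X₅ X₆ : ℝ → ℝ → ℝ → ℝ → ℝ → ℝ → ℝ) (ρ : ℝ → ℝ)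
    (hX₁ : ∀ p q r γ₁ γ₂ γ₃, X₁ p q r γ₁ γ₂ γ₃ = p*q*r)
    (hX₂ : ∀ p q r γ₁ γ₂ γ₃, X₂ p q r γ₁ γ₂ γ₃ = -((p^2-q^2)*r + γ₃)/2)
    (hX₃ : ∀ p q r γ₁ γ₂ γ₃, X₃ p q r γ₁ γ₂ γ₃ =
      -(p*q - q*(p^2+q^2) + q*γ₁ - p*γ₂)/(2*p^2))
    (hX₄ : ∀ p q r γ₁ γ₂ γ₃, X₄ p q r γ₁ γ₂ γ₃ = (p^2+q^2)*q*r + 2*p*r*γ₂ - q*γ₃)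
    (hX₅ : ∀ p q r γ₁ γ₂ γ₃, X₅ p q r γ₁ γ₂ γ₃ = -2*p*q^2*r + p*γ₃ - p*r*γ₁)
    (hX₆ : ∀ p q r γ₁ γ₂ γ₃, X₆ p q r γ₁ γ₂ γ₃ =
      (g₂*p*q + 4*q*(p^2+q^2)^2 + 4*q*γ₁*(3*p^2-q^2) + 4*p*γ₂*(p^2-3*q^2))/(8*p^2))
    (hρ : ∀ p, ρ p = 1/(4*p^2)) :
    ∀ p q r γ₁ γ₂ γ₃ : ℝ, p ≠ 0 →
      deriv (fun p' => ρ p' * X₁ p' q r γ₁ γ₂ γ₃) p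
      + deriv (fun q' => ρ p * X₂ p q' r γ₁ γ₂ γ₃) q
      + deriv (fun r' => ρ p * X₃ p q r' γ₁ γ₂ γ₃) r
      + deriv (fun γ₁' => ρ p * X₄ p q r γ₁' γ₂ γ₃) γ₁
      + deriv (fun γ₂' => ρ p * X₅ p q r γ₁ γ₂' γ₃) γ₂
      + deriv (fun γ₃' => ρ p * X₆ p q r γ₁ γ₂ γ₃') γ₃ = 0 := by
  intro p q r γ₁ γ₂ γ₃ _
  have h₁ : deriv (fun p' => ρ p' * X₁ p' q r γ₁ γ₂ γ₃) p = -(q * r) / (4 * p ^ 2) := by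
    simp only [hρ, hX₁, mul_assoc]
    exact deriv_one_div_four_mul_sq_mul_self_mul (q * r) p
  have h₂ : deriv (fun q' => ρ p * X₂ p q' r γ₁ γ₂ γ₃) q = ρ p * (q * r) := by
    simp only [hX₂]
    rw [deriv_const_mul_field, (hasDerivAt_neg_sub_sq_mul_add_div_two _ _ r q).deriv]
  rw [h₁, h₂]
  simp only [hX₃, hX₄, hX₅, hX₆, deriv_const, hρ]
  ring
end

section
/- Suppose complex-valued differentiable functions x₁, x₂, e₁, e₂, r, γ₃ of t satisfy the system ẋ₁ = -(i/2)(rx₁+γ₃), ẋ₂ = (i/2)(rx₂+γ₃), ė₁ = -ire₁, ė₂ = ire₂, ṙ = (i/2)(x₂-x₁+e₂-e₁), γ̇₃ = (i/2)(e₁x₂-e₂x₁). Then the function r² - 2(x₁+x₂) - e₁ - e₂ is constant (its derivative is identically zero). -/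
open Complex in
theorem stmt_7_general (x₁ x₂ e₁ e₂ r γ₃ : ℝ → ℂ)
    (hx₁ : ∀ t, HasDerivAt x₁ (-(I/2)*(r t * x₁ t + γ₃ t)) t)
    (hx₂ : ∀ t, HasDerivAt x₂ ((I/2)*(r t * x₂ t + γ₃ t)) t)
    (he₁ : ∀ t, HasDerivAt e₁ (-I * r t * e₁ t) t)
    (he₂ : ∀ t, HasDerivAt e₂ (I * r t * e₂ t) t)
    (hr : ∀ t, HasDerivAt r ((I/2)*(x₂ t - x₁ t + e₂ t - e₁ t)) t) :
    ∀ t, HasDerivAt (fun t => (r t)^2 - 2*(x₁ t + x₂ t) - e₁ t - e₂ t) 0 t := by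
  intro t
  have h := ((((hr t).pow 2).sub (((hx₁ t).add (hx₂ t)).const_mul 2)).sub (he₁ t)).sub (he₂ t)
  exact h.congr_deriv (by ring)

open Complex in
theorem stmt_7 (x₁ x₂ e₁ e₂ r γ₃ : ℝ → ℂ)
    (hx₁ : ∀ t, HasDerivAt x₁ (-(I/2)*(r t * x₁ t + γ₃ t)) t)
    (hx₂ : ∀ t, HasDerivAt x₂ ((I/2)*(r t * x₂ t + γ₃ t)) t)
    (he₁ : ∀ t, HasDerivAt e₁ (-I * r t * e₁ t) t)
    (he₂ : ∀ t, HasDerivAt e₂ (I * r t * e₂ t) t)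
    (hr : ∀ t, HasDerivAt r ((I/2)*(x₂ t - x₁ t + e₂ t - e₁ t)) t)
    (hγ₃ : ∀ t, HasDerivAt γ₃ ((I/2)*(e₁ t * x₂ t - e₂ t * x₁ t)) t) :
    ∀ t, HasDerivAt (fun t => (r t)^2 - 2*(x₁ t + x₂ t) - e₁ t - e₂ t) 0 t :=
  stmt_7_general x₁ x₂ e₁ e₂ r γ₃ hx₁ hx₂ he₁ he₂ hr
end

section
/- Suppose differentiable functions x₁, x₂, e₁, e₂, r, γ₃ of t satisfy ẋ₁ = -(i/2)(rx₁+γ₃), ẋ₂ = (i/2)(rx₂+γ₃), ė₁ = -ire₁, ė₂ = ire₂, ṙ = (i/2)(x₂-x₁+e₂-e₁), γ̇₃ = (i/2)(e₁x₂-e₂x₁). Then γ₃² - x₂²e₁ - x₁²e₂ is constant in t. -/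
/-- The rotation of `e` cancels the `r`-dependent part of the flow of `x`, leaving only the
`γ`-forcing in the derivative of `x ^ 2 * e`. -/
theorem hasDerivAt_sq_mul_of_rotation {x e r γ : ℝ → ℂ} {c : ℂ} {t : ℝ}
    (hx : HasDerivAt x (c * (r t * x t + γ t)) t)
    (he : HasDerivAt e (-(2 * c) * r t * e t) t) :
    HasDerivAt (fun s => x s ^ 2 * e s) (2 * c * x t * γ t * e t) t := by
  refine ((hx.fun_pow 2).fun_mul he).congr_deriv ?_
  push_cast
  ring

open Complex in
theorem stmt_9_general (x₁ x₂ e₁ e₂ r γ₃ : ℝ → ℂ)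
    (hx₁ : ∀ t, HasDerivAt x₁ (-(I/2)*(r t * x₁ t + γ₃ t)) t)
    (hx₂ : ∀ t, HasDerivAt x₂ ((I/2)*(r t * x₂ t + γ₃ t)) t)
    (he₁ : ∀ t, HasDerivAt e₁ (-I * r t * e₁ t) t)
    (he₂ : ∀ t, HasDerivAt e₂ (I * r t * e₂ t) t)
    (hγ₃ : ∀ t, HasDerivAt γ₃ ((I/2)*(e₁ t * x₂ t - e₂ t * x₁ t)) t) :
    ∀ t, HasDerivAt (fun t => (γ₃ t)^2 - (x₂ t)^2 * e₁ t - (x₁ t)^2 * e₂ t) 0 t := by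
  intro t
  have hx₂e₁ := hasDerivAt_sq_mul_of_rotation (hx₂ t) ((he₁ t).congr_deriv (by ring))
  have hx₁e₂ := hasDerivAt_sq_mul_of_rotation (hx₁ t) ((he₂ t).congr_deriv (by ring))
  refine (((hγ₃ t).fun_pow 2).fun_sub hx₂e₁ |>.fun_sub hx₁e₂).congr_deriv ?_
  push_cast
  ring

open Complex in
theorem stmt_9 (x₁ x₂ e₁ e₂ r γ₃ : ℝ → ℂ)
    (hx₁ : ∀ t, HasDerivAt x₁ (-(I/2)*(r t * x₁ t + γ₃ t)) t)
    (hx₂ : ∀ t, HasDerivAt x₂ ((I/2)*(r t * x₂ t + γ₃ t)) t)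
    (he₁ : ∀ t, HasDerivAt e₁ (-I * r t * e₁ t) t)
    (he₂ : ∀ t, HasDerivAt e₂ (I * r t * e₂ t) t)
    (hr : ∀ t, HasDerivAt r ((I/2)*(x₂ t - x₁ t + e₂ t - e₁ t)) t)
    (hγ₃ : ∀ t, HasDerivAt γ₃ ((I/2)*(e₁ t * x₂ t - e₂ t * x₁ t)) t) :
    ∀ t, HasDerivAt (fun t => (γ₃ t)^2 - (x₂ t)^2 * e₁ t - (x₁ t)^2 * e₂ t) 0 t :=
  stmt_9_general x₁ x₂ e₁ e₂ r γ₃ hx₁ hx₂ he₁ he₂ hγ₃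
end
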